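/- Limits of the variance factor: for fixed ξ₀ > 0 let ξ(α) = ξ₀/α and χ_V(α) = α ξ(α)² ∫ t (1 + ξ(α) t)^{-2} dμ_α(t). Then χ_V(α) → 0 both as α → 0⁺ and as α → ∞. -/

import Mathlib

open MeasureTheory Real Filter

/-- The Marchenko–Pastur distribution with ratio parameter `α`:
`μ_α = max(0, 1−1/α) δ₀ + (√((α₊−t)(t−α₋))/(2παt)) 1_{[α₋,α₊]}(t) dt`, `α_± = (1±√α)²`. -/
noncomputable def mpMeasure (α : ℝ) : Measure ℝ :=
  ENNReal.ofReal (max 0 (1 - 1 / α)) • Measure.dirac 0 +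
    volume.withDensity fun t => ENNReal.ofReal
      ((Set.Icc ((1 - Real.sqrt α) ^ 2) ((1 + Real.sqrt α) ^ 2)).indicator
        (fun s => Real.sqrt (((1 + Real.sqrt α) ^ 2 - s) * (s - (1 - Real.sqrt α) ^ 2)) /
          (2 * π * α * s)) t)

/-!
The integrand `t / (1 + ξ t)²` vanishes at the atom `0`, so only the continuous part of `μ_α`
matters. On its support `[α₋, α₊]`, of length `4√α`, the weighted density `t ρ_α(t)` is at most
`1 / (π√α)` because `√((α₊ - t)(t - α₋)) ≤ (α₊ - α₋)/2 = 2√α`. Hence any `f` with `f 0 = 0` and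
`|f t| ≤ C t` on the support has `|∫ f dμ_α| ≤ 4C/π`, uniformly in `α`.

As `α → ∞` take `C = 1`: `χ_V(α) ≤ 4ξ₀²/(πα)`. As `α → 0⁺` the support lies in `[1/4, ∞)`, where
`t / (1 + ξ t)² ≤ 1/(ξ² t) ≤ 16 t / ξ²`; with `ξ = ξ₀/α` this gives `χ_V(α) ≤ 64α/π`.
-/

theorem sqrt_sub_mul_sub_le {a b : ℝ} (hba : b ≤ a) (t : ℝ) :
    Real.sqrt ((a - t) * (t - b)) ≤ (a - b) / 2 := by
  rw [Real.sqrt_le_left (by linarith)]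
  nlinarith [sq_nonneg (a + b - 2 * t)]

theorem norm_mul_inv_one_add_mul_sq_le_self {ξ t : ℝ} (hξ : 0 ≤ ξ) (ht : 0 ≤ t) :
    ‖t * ((1 + ξ * t) ^ 2)⁻¹‖ ≤ t := by
  have hden : 1 ≤ (1 + ξ * t) ^ 2 := by nlinarith [mul_nonneg hξ ht]
  rw [Real.norm_of_nonneg (by positivity)]
  exact mul_le_of_le_one_right ht (inv_le_one_of_one_le₀ hden)

theorem norm_mul_inv_one_add_mul_sq_le_of_quarter_le {ξ t : ℝ} (hξ : 0 < ξ) (ht : 1 / 4 ≤ t) :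
    ‖t * ((1 + ξ * t) ^ 2)⁻¹‖ ≤ 16 / ξ ^ 2 * t := by
  rw [Real.norm_of_nonneg (by positivity), ← div_eq_mul_inv, div_le_iff₀ (by positivity)]
  have ht2 : 1 ≤ 16 * t ^ 2 := by nlinarith
  calc t ≤ 16 * t ^ 3 := by nlinarith
    _ = 16 / ξ ^ 2 * t * (ξ * t) ^ 2 := by field_simp
    _ ≤ 16 / ξ ^ 2 * t * (1 + ξ * t) ^ 2 := by gcongr; linarith

namespace MarchenkoPastur

noncomputable def density (α s : ℝ) : ℝ :=
  Real.sqrt (((1 + Real.sqrt α) ^ 2 - s) * (s - (1 - Real.sqrt α) ^ 2)) / (2 * π * α * s)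

def support (α : ℝ) : Set ℝ :=
  Set.Icc ((1 - Real.sqrt α) ^ 2) ((1 + Real.sqrt α) ^ 2)

theorem mpMeasure_eq (α : ℝ) :
    mpMeasure α = ENNReal.ofReal (max 0 (1 - 1 / α)) • Measure.dirac 0 +
      volume.withDensity fun t => ENNReal.ofReal ((support α).indicator (density α) t) :=
  rfl

theorem nonneg_of_mem_support {α t : ℝ} (ht : t ∈ support α) : 0 ≤ t :=
  (sq_nonneg _).trans ht.1

theorem quarter_le_of_mem_support {α t : ℝ} (hα : α ≤ 1 / 4) (ht : t ∈ support α) :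
    1 / 4 ≤ t := by
  have hsqrt : Real.sqrt α ≤ 1 / 2 := by
    rw [Real.sqrt_le_left (by norm_num)]
    linarith
  nlinarith [ht.1, Real.sqrt_nonneg α]

theorem measurableSet_support {α : ℝ} : MeasurableSet (support α) :=
  measurableSet_Icc

theorem volume_support (α : ℝ) :
    volume (support α) = ENNReal.ofReal (4 * Real.sqrt α) := by
  rw [support, Real.volume_Icc]
  ring_nf

theorem density_nonneg {α : ℝ} (hα : 0 ≤ α) {t : ℝ} (ht : 0 ≤ t) : 0 ≤ density α t := by
  unfold density
  positivity

theorem mul_density_le {α : ℝ} (hα : 0 < α) (t : ℝ) :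
    t * density α t ≤ 1 / (π * Real.sqrt α) := by
  have hsqrt : 0 < Real.sqrt α := Real.sqrt_pos.mpr hα
  rcases eq_or_ne t 0 with rfl | ht
  · rw [zero_mul]
    positivity
  have hroot := sqrt_sub_mul_sub_le (a := (1 + Real.sqrt α) ^ 2) (b := (1 - Real.sqrt α) ^ 2)
    (by nlinarith) t
  calc t * density α t
      = Real.sqrt (((1 + Real.sqrt α) ^ 2 - t) * (t - (1 - Real.sqrt α) ^ 2)) / (2 * π * α) := by
        rw [density]
        field_simp
    _ ≤ ((1 + Real.sqrt α) ^ 2 - (1 - Real.sqrt α) ^ 2) / 2 / (2 * π * α) := by gcongr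
    _ = 1 / (π * Real.sqrt α) := by
        field_simp
        linear_combination 4 * Real.sq_sqrt hα.le

theorem density_mul_le {α C t y : ℝ} (hα : 0 < α) (hC : 0 ≤ C) (ht : t ∈ support α)
    (hy : y ≤ C * t) : density α t * y ≤ C / (π * Real.sqrt α) :=
  calc density α t * y ≤ density α t * (C * t) :=
        mul_le_mul_of_nonneg_left hy (density_nonneg hα.le (nonneg_of_mem_support ht))
    _ = C * (t * density α t) := by ring
    _ ≤ C * (1 / (π * Real.sqrt α)) := mul_le_mul_of_nonneg_left (mul_density_le hα t) hC
    _ = C / (π * Real.sqrt α) := by ring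

theorem lintegral_norm_le {α C : ℝ} {f : ℝ → ℝ} (hα : 0 < α) (hC : 0 ≤ C) (hf₀ : f 0 = 0)
    (hf : ∀ t ∈ support α, ‖f t‖ ≤ C * t) :
    ∫⁻ t, ENNReal.ofReal ‖f t‖ ∂mpMeasure α ≤ ENNReal.ofReal (4 * C / π) := by
  set g : ℝ → ENNReal := fun t => ENNReal.ofReal ((support α).indicator (density α) t)
  have hg : Measurable g := by
    refine ENNReal.measurable_ofReal.comp (Measurable.indicator ?_ measurableSet_support)
    unfold density
    fun_prop
  have hgf : ∀ t, g t * ENNReal.ofReal ‖f t‖ ≤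
      (support α).indicator (fun _ => ENNReal.ofReal (C / (π * Real.sqrt α))) t := by
    intro t
    by_cases ht : t ∈ support α
    · simp only [g, Set.indicator_of_mem ht]
      rw [← ENNReal.ofReal_mul (density_nonneg hα.le (nonneg_of_mem_support ht))]
      exact ENNReal.ofReal_le_ofReal (density_mul_le hα hC ht (hf t ht))
    · simp [g, Set.indicator_of_notMem ht]
  calc ∫⁻ t, ENNReal.ofReal ‖f t‖ ∂mpMeasure α
      ≤ ∫⁻ t, g t * ENNReal.ofReal ‖f t‖ := by
        rw [mpMeasure_eq, lintegral_add_measure, lintegral_smul_measure, lintegral_dirac, hf₀,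
          norm_zero, ENNReal.ofReal_zero, smul_zero, zero_add]
        exact lintegral_withDensity_le_lintegral_mul _ hg _
    _ ≤ ∫⁻ t, (support α).indicator (fun _ => ENNReal.ofReal (C / (π * Real.sqrt α))) t :=
        lintegral_mono hgf
    _ = ENNReal.ofReal (4 * C / π) := by
        have hsqrt : 0 < Real.sqrt α := Real.sqrt_pos.mpr hα
        rw [lintegral_indicator_const measurableSet_support, volume_support,
          ← ENNReal.ofReal_mul (by positivity)]
        congr 1
        field_simp

theorem norm_integral_le {α C : ℝ} {f : ℝ → ℝ} (hα : 0 < α) (hC : 0 ≤ C) (hf₀ : f 0 = 0)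
    (hf : ∀ t ∈ support α, ‖f t‖ ≤ C * t) :
    ‖∫ t, f t ∂mpMeasure α‖ ≤ 4 * C / π :=
  (norm_integral_le_lintegral_norm f).trans
    (ENNReal.toReal_le_of_le_ofReal (by positivity) (lintegral_norm_le hα hC hf₀ hf))

end MarchenkoPastur

open MarchenkoPastur in
/-- Limits of the variance factor `χ_V(α) = α (ξ₀/α)² ∫ t (1 + (ξ₀/α) t)^{-2} dμ_α(t)`:
`χ_V(α) → 0` both as `α → 0⁺` and as `α → ∞`. -/
theorem mp_variance_factor_limits (ξ₀ : ℝ) (hξ₀ : 0 < ξ₀) :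
    Tendsto (fun α : ℝ => α * (ξ₀ / α) ^ 2 * ∫ t, t * ((1 + (ξ₀ / α) * t) ^ 2)⁻¹ ∂(mpMeasure α))
      (nhdsWithin 0 (Set.Ioi 0)) (nhds 0) ∧
    Tendsto (fun α : ℝ => α * (ξ₀ / α) ^ 2 * ∫ t, t * ((1 + (ξ₀ / α) * t) ^ 2)⁻¹ ∂(mpMeasure α))
      atTop (nhds 0) := by
  constructor
  · refine squeeze_zero_norm' (a := fun α => 64 / π * α) ?_ ?_
    · filter_upwards [Ioo_mem_nhdsGT (show (0 : ℝ) < 1 / 4 by norm_num)] with α ⟨hα, hα4⟩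
      have hξ : 0 < ξ₀ / α := by positivity
      have hint := norm_integral_le hα (by positivity) (by simp) fun t ht =>
        norm_mul_inv_one_add_mul_sq_le_of_quarter_le hξ (quarter_le_of_mem_support hα4.le ht)
      rw [norm_mul, Real.norm_of_nonneg (by positivity)]
      calc α * (ξ₀ / α) ^ 2 * _ ≤ α * (ξ₀ / α) ^ 2 * (4 * (16 / (ξ₀ / α) ^ 2) / π) := by gcongr
        _ = 64 / π * α := by field_simp; ring
    · simpa using tendsto_nhdsWithin_of_tendsto_nhds ((continuous_const_mul (64 / π)).tendsto 0)
  · refine squeeze_zero_norm' (a := fun α => 4 * ξ₀ ^ 2 / π / α) ?_ ?_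
    · filter_upwards [eventually_gt_atTop 0] with α hα
      have hint := norm_integral_le hα zero_le_one (by simp) fun t ht =>
        (norm_mul_inv_one_add_mul_sq_le_self (ξ := ξ₀ / α) (by positivity)
          (nonneg_of_mem_support ht)).trans_eq (one_mul t).symm
      rw [norm_mul, Real.norm_of_nonneg (by positivity)]
      calc α * (ξ₀ / α) ^ 2 * _ ≤ α * (ξ₀ / α) ^ 2 * (4 * 1 / π) := by gcongr
        _ = 4 * ξ₀ ^ 2 / π / α := by field_simp
    · exact tendsto_const_nhds.div_atTop tendsto_id
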